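/- Let t ∈ 𝒮'(ℝ^N) and ω ∈ ℕ₊ with sd(t) ≤ −ω. Then t has zero of order ω at the origin in the sense of Łojasiewicz: for every multi-index γ with |γ| < ω and every g ∈ 𝒮(ℝ^N), lim_{ε↘0} ⟨∂^γ t, g_ε⟩ = 0, where g_ε(q) := ε^{−N} g(q/ε). -/

import Mathlib

/-!
Dilations commute with derivatives up to a power of the scale:
`∂^γ (g (·/λ)) = λ^{-|γ|} (∂^γ g)(·/λ)`. Hence `sd(∂^γ t) ≤ sd(t) + |γ|`, which is `< 0` when
`|γ| < ω`; and `0` lying in the scaling set of `∂^γ t` says precisely that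
`⟨∂^γ t, g_ε⟩ = ε^{-N} ⟨∂^γ t, g(·/ε)⟩ → 0`.
-/

open MeasureTheory SchwartzMap Filter Topology

noncomputable section

abbrev Euc (N : ℕ) : Type := EuclideanSpace ℝ (Fin N)

/-- Iterated partial derivative `∂^α` (multi-index `α`) on Schwartz functions on `ℝ^N`. -/
def multiDeriv {N : ℕ} (α : Fin N → ℕ) : 𝓢(Euc N, ℂ) →L[ℂ] 𝓢(Euc N, ℂ) :=
  (Finset.univ.toList (α := Fin N)).foldr
    (fun i A =>
      ((LineDeriv.lineDerivOpCLM ℂ 𝓢(Euc N, ℂ) (EuclideanSpace.single i (1 : ℝ)) :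
          𝓢(Euc N, ℂ) →L[ℂ] 𝓢(Euc N, ℂ)) ^ (α i)).comp A)
    (ContinuousLinearMap.id ℂ _)

/-- `t(q) = O^dist(|q|^δ)` : the regularity condition of Duch, Def. 2.9 (case `M = 0`).
There are a neighbourhood `O` of the origin, a constant `C > 0` and continuous functions
`tc α` on `O`, all but finitely many zero, vanishing when `δ + |α| < 0`, bounded by
`C |q|^{δ+|α|}`, such that `t = Σ_α ∂^α (tc α)` on test functions supported in `O`. -/
def OBig {N : ℕ} (t : 𝓢(Euc N, ℂ) →L[ℂ] ℂ) (δ : ℝ) : Prop :=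
  ∃ O : Set (Euc N), IsOpen O ∧ (0 : Euc N) ∈ O ∧
  ∃ C : ℝ, 0 < C ∧
  ∃ tc : (Fin N → ℕ) → Euc N → ℂ,
    {α | tc α ≠ 0}.Finite ∧
    (∀ α, ContinuousOn (tc α) O) ∧
    (∀ α : Fin N → ℕ, δ + ((∑ i, α i : ℕ) : ℝ) < 0 → tc α = 0) ∧
    (∀ α : Fin N → ℕ, ∀ q ∈ O, ‖tc α q‖ ≤ C * ‖q‖ ^ (δ + ((∑ i, α i : ℕ) : ℝ))) ∧
    (∀ g : 𝓢(Euc N, ℂ), HasCompactSupport ⇑g → tsupport ⇑g ⊆ O →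
      t g = ∑ᶠ α : Fin N → ℕ,
        (-1 : ℂ) ^ ((∑ i, α i : ℕ)) * ∫ q in O, tc α q * multiDeriv α g q)

/-- `h ε` is the scaled family `q ↦ ε^{-N} g(q/ε)` (for `ε > 0`). -/
def IsScaledFam (N : ℕ) (g : 𝓢(Euc N, ℂ)) (h : ℝ → 𝓢(Euc N, ℂ)) : Prop :=
  ∀ ε : ℝ, 0 < ε → ∀ q : Euc N, h ε q = ((ε ^ N : ℝ)⁻¹ : ℂ) * g (ε⁻¹ • q)

/-- `t` has value `c` at zero in the sense of Łojasiewicz:  for every `g ∈ 𝒮(ℝ^N)` with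
`∫ g(q) d^N q/(2π)^N = 1` one has `lim_{ε↘0} ⟨t, g_ε⟩/(2π)^N = c`. -/
def HasLojValue {N : ℕ} (t : 𝓢(Euc N, ℂ) →L[ℂ] ℂ) (c : ℂ) : Prop :=
  ∀ g : 𝓢(Euc N, ℂ), (∫ q : Euc N, g q) = ((2 * Real.pi) ^ N : ℝ) →
    ∀ h : ℝ → 𝓢(Euc N, ℂ), IsScaledFam N g h →
      Tendsto (fun ε : ℝ => t (h ε) / ((2 * Real.pi) ^ N : ℝ))
        (𝓝[>] (0 : ℝ)) (𝓝 c)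

/-- The distributional derivative `∂^γ t`, `⟨∂^γ t, g⟩ = (−1)^{|γ|} ⟨t, ∂^γ g⟩`. -/
def distDeriv {N : ℕ} (γ : Fin N → ℕ) (t : 𝓢(Euc N, ℂ) →L[ℂ] ℂ) :
    𝓢(Euc N, ℂ) →L[ℂ] ℂ :=
  ((-1 : ℂ) ^ ((∑ i, γ i : ℕ))) • (t.comp (multiDeriv γ))

/-- `h λ` is the dilated family `x ↦ g(x/λ)` (for `λ > 0`). -/
def IsDilatedFam {N : ℕ} (g : 𝓢(Euc N, ℂ)) (h : ℝ → 𝓢(Euc N, ℂ)) : Prop :=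
  ∀ l : ℝ, 0 < l → ∀ x : Euc N, h l x = g (l⁻¹ • x)

/-- `s` belongs to the defining set of the Steinmann scaling degree of `t`:
`lim_{λ↘0} λ^s λ^{-N} ⟨t, g(·/λ)⟩ = 0` for every Schwartz `g`. -/
def InScalingSet {N : ℕ} (t : 𝓢(Euc N, ℂ) →L[ℂ] ℂ) (s : ℝ) : Prop :=
  ∀ g : 𝓢(Euc N, ℂ), ∀ h : ℝ → 𝓢(Euc N, ℂ), IsDilatedFam g h →
    Tendsto (fun l : ℝ => ((l ^ s * (l ^ N : ℝ)⁻¹ : ℝ) : ℂ) * t (h l))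
      (𝓝[>] (0 : ℝ)) (𝓝 0)

section Dilation

variable (𝕜 : Type*) {E F : Type*} [RCLike 𝕜] [NormedAddCommGroup E] [NormedSpace ℝ E]
  [NormedAddCommGroup F] [NormedSpace ℝ F] [NormedSpace 𝕜 F]

/-- `dilation 𝕜 l f = f (l⁻¹ • ·)`, with the junk value `0` at `l = 0`. -/
def dilation (l : ℝ) : 𝓢(E, F) →L[𝕜] 𝓢(E, F) :=
  if hl : l = 0 then 0
  else compCLMOfContinuousLinearEquiv 𝕜
    (ContinuousLinearEquiv.smulLeft (Units.mk0 l⁻¹ (inv_ne_zero hl)))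

variable {𝕜}

lemma dilation_apply {l : ℝ} (hl : l ≠ 0) (f : 𝓢(E, F)) (x : E) :
    dilation 𝕜 l f x = f (l⁻¹ • x) := by
  simp [dilation, hl, Units.smul_def]

open LineDeriv in
lemma lineDerivOp_dilation {l : ℝ} (hl : l ≠ 0) (v : E) (f : 𝓢(E, F)) :
    ∂_{v} (dilation 𝕜 l f) = ((l⁻¹ : ℝ) : 𝕜) • dilation 𝕜 l (∂_{v} f) := by
  simp only [dilation, hl, dite_false, lineDerivOp_compCLMOfContinuousLinearEquiv,
    ContinuousLinearEquiv.smulLeft_apply_apply, Units.smul_mk0, lineDerivOp_left_smul]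
  rw [RCLike.real_smul_eq_coe_smul (K := 𝕜), map_smul]

end Dilation

section QuasiCommuting

variable {R M ι : Type*} [CommSemiring R] [TopologicalSpace M] [AddCommMonoid M] [Module R M]
  {T : M →L[R] M} {c : R}

lemma ContinuousLinearMap.pow_apply_of_apply_eq_smul {D : M →L[R] M}
    (hD : ∀ f, D (T f) = c • T (D f)) (n : ℕ) (f : M) :
    (D ^ n) (T f) = c ^ n • T ((D ^ n) f) := by
  induction n with
  | zero => simp
  | succ n ih =>
    rw [pow_succ', mul_apply_eq_comp, mul_apply_eq_comp, ih, map_smul, hD, smul_smul, pow_succ]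

lemma List.foldr_pow_comp_apply_of_apply_eq_smul (D : ι → M →L[R] M)
    (hD : ∀ i f, D i (T f) = c • T (D i f)) (α : ι → ℕ) (L : List ι) (f : M) :
    (L.foldr (fun i A => (D i ^ α i).comp A) (ContinuousLinearMap.id R M)) (T f) =
      c ^ (L.map α).sum •
        T ((L.foldr (fun i A => (D i ^ α i).comp A) (ContinuousLinearMap.id R M)) f) := by
  induction L with
  | nil => simp
  | cons i L ih =>
    simp only [List.foldr_cons, ContinuousLinearMap.comp_apply, ih, map_smul,
      ContinuousLinearMap.pow_apply_of_apply_eq_smul (hD i), List.map_cons, List.sum_cons,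
      smul_smul, pow_add, mul_comm]

end QuasiCommuting

section ScalingDegree

variable {N : ℕ}

lemma multiDeriv_dilation (γ : Fin N → ℕ) {l : ℝ} (hl : l ≠ 0) (f : 𝓢(Euc N, ℂ)) :
    multiDeriv γ (dilation ℂ l f) =
      ((l⁻¹ : ℝ) : ℂ) ^ (∑ i, γ i) • dilation ℂ l (multiDeriv γ f) := by
  rw [multiDeriv, List.foldr_pow_comp_apply_of_apply_eq_smul
      (fun i => LineDeriv.lineDerivOpCLM ℂ 𝓢(Euc N, ℂ) (EuclideanSpace.single i (1 : ℝ)))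
      (fun i => lineDerivOp_dilation hl _),
    Finset.sum_map_toList]
  -- the `RCLike` and `Complex` coercions `ℝ → ℂ` agree definitionally
  rfl

lemma IsDilatedFam.eq_dilation {g : 𝓢(Euc N, ℂ)} {h : ℝ → 𝓢(Euc N, ℂ)} (hh : IsDilatedFam g h)
    {l : ℝ} (hl : 0 < l) : h l = dilation ℂ l g := by
  ext x
  rw [hh l hl, dilation_apply hl.ne']

lemma isDilatedFam_dilation (g : 𝓢(Euc N, ℂ)) : IsDilatedFam g (fun l => dilation ℂ l g) :=
  fun _ hl x => dilation_apply hl.ne' g x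

lemma IsScaledFam.eq_smul_dilation {g : 𝓢(Euc N, ℂ)} {h : ℝ → 𝓢(Euc N, ℂ)}
    (hh : IsScaledFam N g h) {ε : ℝ} (hε : 0 < ε) :
    h ε = ((ε ^ N : ℝ)⁻¹ : ℂ) • dilation ℂ ε g := by
  ext q
  rw [hh ε hε q, smul_apply, dilation_apply hε.ne', smul_eq_mul]

lemma distDeriv_dilation (γ : Fin N → ℕ) (t : 𝓢(Euc N, ℂ) →L[ℂ] ℂ) {l : ℝ} (hl : l ≠ 0)
    (g : 𝓢(Euc N, ℂ)) :
    distDeriv γ t (dilation ℂ l g) =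
      (-1) ^ (∑ i, γ i) * ((l⁻¹ : ℝ) : ℂ) ^ (∑ i, γ i) * t (dilation ℂ l (multiDeriv γ g)) := by
  rw [distDeriv, smul_apply, ContinuousLinearMap.comp_apply,
    multiDeriv_dilation γ hl, map_smul, smul_eq_mul, smul_eq_mul, mul_assoc]

lemma InScalingSet.distDeriv {t : 𝓢(Euc N, ℂ) →L[ℂ] ℂ} {s : ℝ} (ht : InScalingSet t s)
    (γ : Fin N → ℕ) : InScalingSet (distDeriv γ t) (s + ∑ i, γ i) := by
  intro g h hh
  have key := (ht (multiDeriv γ g) _ (isDilatedFam_dilation _)).const_mul ((-1) ^ (∑ i, γ i))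
  rw [mul_zero] at key
  refine key.congr' ?_
  filter_upwards [self_mem_nhdsWithin] with l (hl : 0 < l)
  have hpow : l ^ (s + ∑ i, γ i) * l⁻¹ ^ (∑ i, γ i) = l ^ s := by
    rw [Real.rpow_add_natCast hl.ne', inv_pow, mul_inv_cancel_right₀ (pow_ne_zero _ hl.ne')]
  rw [hh.eq_dilation hl, distDeriv_dilation γ t hl.ne', ← hpow]
  push_cast
  ring

lemma InScalingSet.hasLojValue_zero {t : 𝓢(Euc N, ℂ) →L[ℂ] ℂ} (ht : InScalingSet t 0) :
    HasLojValue t 0 := by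
  intro g _ h hh
  rw [← zero_div (((2 * Real.pi) ^ N : ℝ) : ℂ)]
  refine Tendsto.div_const ((ht g _ (isDilatedFam_dilation g)).congr' ?_) _
  filter_upwards [self_mem_nhdsWithin] with ε (hε : 0 < ε)
  rw [hh.eq_smul_dilation hε, map_smul, smul_eq_mul, Real.rpow_zero, one_mul, Complex.ofReal_inv]

end ScalingDegree

/-- `sd(t) ≤ −ω` is encoded as: every `s > −ω` lies in the (upward closed) defining set of the
scaling degree. -/
theorem stmt16_general (N : ℕ) (t : 𝓢(Euc N, ℂ) →L[ℂ] ℂ) (ω : ℕ)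
    (hsd : ∀ s : ℝ, -(ω : ℝ) < s → InScalingSet t s) :
    ∀ γ : Fin N → ℕ, ((∑ i, γ i : ℕ) : ℝ) < ω →
      HasLojValue (distDeriv γ t) 0 := by
  intro γ hγ
  have ht : InScalingSet t (-(∑ i, γ i : ℕ)) := hsd _ (neg_lt_neg hγ)
  have hdt := ht.distDeriv γ
  rw [neg_add_cancel] at hdt
  exact hdt.hasLojValue_zero

/-- If `sd(t) ≤ −ω` (equivalently, since the defining set of the scaling
degree is upward closed, every `s > −ω` belongs to it), then `t` has zero of order `ω` at the
origin in the sense of Łojasiewicz. -/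
theorem stmt16 (N : ℕ) (t : 𝓢(Euc N, ℂ) →L[ℂ] ℂ) (ω : ℕ) (hω : 0 < ω)
    (hsd : ∀ s : ℝ, -(ω : ℝ) < s → InScalingSet t s) :
    ∀ γ : Fin N → ℕ, ((∑ i, γ i : ℕ) : ℝ) < ω →
      HasLojValue (distDeriv γ t) 0 :=
  stmt16_general N t ω hsd

end
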